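/- arXiv:0910.3641 — 3 statements merged into one kernel-verified Lean document; each statement's English description precedes it below -/
import Mathlib

section
/- Let R be a commutative ring and let P, Q be polynomials over R with natDegree P ≥ 1 and natDegree Q ≥ 1. Then there exist polynomials U and V over R with natDegree U < natDegree Q and natDegree V < natDegree P such that U·P + V·Q equals the constant polynomial C(Res(P, Q)). -/
open Polynomial

/-! `sylvesterMatrix P Q` is the transpose of Mathlib's `Polynomial.sylvester Q P`, so the two
resultants agree. The multipliers `U`, `V` are then read off the adjugate of the Sylvester matrix
applied to the constant polynomial `1` (`Polynomial.exists_mul_add_mul_eq_C_resultant`). -/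

/-- The Sylvester matrix of two polynomials `P` and `Q` over a commutative ring:
a square matrix of size `natDegree P + natDegree Q` whose first `natDegree Q` rows
are the coefficient vectors of `X ^ i * P` (for `0 ≤ i < natDegree Q`) and whose
remaining rows are the coefficient vectors of `X ^ i * Q` (for `0 ≤ i < natDegree P`). -/
noncomputable def sylvesterMatrix {R : Type*} [CommRing R] (P Q : Polynomial R) :
    Matrix (Fin (P.natDegree + Q.natDegree)) (Fin (P.natDegree + Q.natDegree)) R :=
  fun i j =>
    if (i : ℕ) < Q.natDegree then (X ^ (i : ℕ) * P).coeff j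
    else (X ^ ((i : ℕ) - Q.natDegree) * Q).coeff j

/-- The resultant of two polynomials: the determinant of their Sylvester matrix. -/
noncomputable def resultant {R : Type*} [CommRing R] (P Q : Polynomial R) : R :=
  (sylvesterMatrix P Q).det

theorem Polynomial.coeff_X_pow_mul_eq_ite_mem_Icc {R : Type*} [Semiring R] (p : R[X])
    (k d : ℕ) :
    (X ^ k * p).coeff d = if d ∈ Set.Icc k (k + p.natDegree) then p.coeff (d - k) else 0 := by
  simp only [coeff_X_pow_mul', Set.mem_Icc, ite_and]
  split_ifs <;> first | rfl | exact coeff_eq_zero_of_natDegree_lt (by omega)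

theorem sylvesterMatrix_eq_reindex_transpose_sylvester {R : Type*} [CommRing R]
    (P Q : Polynomial R) :
    sylvesterMatrix P Q = (sylvester Q P Q.natDegree P.natDegree).transpose.reindex
      (finCongr (add_comm _ _)) (finCongr (add_comm _ _)) := by
  ext ⟨i, hi⟩ j
  simp only [sylvesterMatrix, sylvester, Matrix.reindex_apply, Matrix.submatrix_apply,
    Matrix.transpose_apply, Matrix.of_apply, finCongr_symm, finCongr_apply]
  split_ifs with h
  · rw [show Fin.cast _ ⟨i, hi⟩ = Fin.castAdd P.natDegree ⟨i, h⟩ from rfl, Fin.addCases_left,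
      coeff_X_pow_mul_eq_ite_mem_Icc]
    rfl
  · rw [show Fin.cast _ ⟨i, hi⟩ = Fin.natAdd Q.natDegree ⟨i - Q.natDegree, by omega⟩ from
      Fin.ext (by simp only [Fin.cast_mk, Fin.natAdd_mk]; omega), Fin.addCases_right,
      coeff_X_pow_mul_eq_ite_mem_Icc]
    rfl

theorem resultant_eq_polynomial_resultant_swap {R : Type*} [CommRing R] (P Q : Polynomial R) :
    _root_.resultant P Q = Polynomial.resultant Q P := by
  rw [_root_.resultant, sylvesterMatrix_eq_reindex_transpose_sylvester, Matrix.det_reindex_self,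
    Matrix.det_transpose, Polynomial.resultant]

theorem Polynomial.natDegree_lt_of_degree_lt {R : Type*} [Semiring R] {p : R[X]} {n : ℕ}
    (hn : n ≠ 0) (h : p.degree < n) : p.natDegree < n := by
  rcases eq_or_ne p 0 with rfl | hp
  · simpa [Nat.pos_iff_ne_zero]
  · exact (natDegree_lt_iff_degree_lt hp).2 h

/-- Bézout's 'équation-somme': the resultant of `P` and `Q` is a combination
`U·P + V·Q` with `natDegree U < natDegree Q` and `natDegree V < natDegree P`. -/
theorem resultant_eq_comb {R : Type*} [CommRing R]
    (P Q : Polynomial R) (hP : 1 ≤ P.natDegree) (hQ : 1 ≤ Q.natDegree) :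
    ∃ U V : Polynomial R, U.natDegree < Q.natDegree ∧ V.natDegree < P.natDegree ∧
      U * P + V * Q = C (_root_.resultant P Q) := by
  obtain ⟨V, U, hV, hU, h⟩ :=
    exists_mul_add_mul_eq_C_resultant Q P le_rfl le_rfl (Or.inl (by omega))
  refine ⟨U, V, natDegree_lt_of_degree_lt (by omega) hU,
    natDegree_lt_of_degree_lt (by omega) hV, ?_⟩
  rw [resultant_eq_polynomial_resultant_swap, ← h]
  ring
end

section
/- For all natural numbers n and T and every k : Fin n → ℕ, one has the integer identity ∑_{S ⊆ Fin n} (−1)^{n−|S|} · ((T + ∑_{i∈S} k(i) + n).choose n) = ∏ᵢ k(i), the sum being over all subsets S of Fin n. -/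
/-!
Writing `Δ_h f (y) = f (y + h) - f y`, the alternating sum over subsets is the mixed difference
`Δ_{k₁} ⋯ Δ_{kₙ}` applied to `y ↦ (y + n).choose n` at `T`. Peeling off one difference, Pascal's
rule telescopes `Δ_h (y ↦ (y + m + 1).choose (m + 1))` into a sum of `h` shifted copies of
`y ↦ (y + m).choose m`, so by induction the result is `h` times the product of the other `kᵢ`.
-/

open Finset fwdDiff

section MixedFwdDiff

variable {ι M G : Type*} [AddCommMonoid M] [AddCommGroup G]

/-- The mixed forward difference `(∏ i ∈ s, Δ_[k i]) f x`, expanded by inclusion–exclusion. -/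
def mixedFwdDiff (s : Finset ι) (k : ι → M) (f : M → G) (x : M) : G :=
  ∑ S ∈ s.powerset, (-1 : ℤ) ^ (#s - #S) • f (x + ∑ i ∈ S, k i)

@[simp]
lemma mixedFwdDiff_empty (k : ι → M) (f : M → G) (x : M) :
    mixedFwdDiff ∅ k f x = f x := by
  simp [mixedFwdDiff]

lemma mixedFwdDiff_insert [DecidableEq ι] {s : Finset ι} {a : ι} (ha : a ∉ s) (k : ι → M)
    (f : M → G) (x : M) :
    mixedFwdDiff (insert a s) k f x = mixedFwdDiff s k (Δ_[k a] f) x := by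
  rw [mixedFwdDiff, sum_powerset_insert ha, ← sum_add_distrib, mixedFwdDiff]
  refine sum_congr rfl fun S hS => ?_
  have haS : a ∉ S := fun h => ha (mem_powerset.mp hS h)
  have hcard : #S ≤ #s := card_le_card (mem_powerset.mp hS)
  rw [card_insert_of_notMem ha, card_insert_of_notMem haS, sum_insert haS,
    show #s + 1 - #S = #s - #S + 1 by omega, Nat.add_sub_add_right, pow_succ, mul_neg_one,
    neg_smul, fwdDiff, smul_sub, add_left_comm x, add_comm (k a)]
  abel

lemma mixedFwdDiff_sum_shift {α : Type*} (s : Finset ι) (k : ι → M) (t : Finset α)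
    (c : α → M) (f : M → G) (x : M) :
    mixedFwdDiff s k (fun y => ∑ j ∈ t, f (y + c j)) x =
      ∑ j ∈ t, mixedFwdDiff s k f (x + c j) := by
  simp only [mixedFwdDiff, smul_sum]
  rw [sum_comm]
  simp only [add_right_comm x]

end MixedFwdDiff

lemma fwdDiff_eq_sum_range {G : Type*} [AddCommGroup G] (f : ℕ → G) (h y : ℕ) :
    Δ_[h] f y = ∑ j ∈ range h, Δ_[1] f (y + j) := by
  simp only [fwdDiff]
  exact (sum_range_sub (fun j => f (y + j)) h).symm

lemma fwdDiff_add_choose (m h : ℕ) :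
    Δ_[h] (fun y => ((y + (m + 1)).choose (m + 1) : ℤ)) =
      fun y => ∑ j ∈ range h, ((y + (j + 1) + m).choose m : ℤ) := by
  ext y
  rw [fwdDiff_eq_sum_range]
  refine sum_congr rfl fun j _ => ?_
  rw [fwdDiff, show y + j + 1 + (m + 1) = (y + (j + 1) + m) + 1 by ring,
    Nat.choose_succ_succ', show y + j + (m + 1) = y + (j + 1) + m by ring]
  push_cast
  ring

lemma mixedFwdDiff_add_choose {ι : Type*} [DecidableEq ι] (s : Finset ι) (k : ι → ℕ) (x : ℕ) :
    mixedFwdDiff s k (fun y => ((y + #s).choose #s : ℤ)) x = ∏ i ∈ s, (k i : ℤ) := by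
  induction s using Finset.induction_on generalizing x with
  | empty => simp
  | @insert a s ha ih =>
    rw [mixedFwdDiff_insert ha, card_insert_of_notMem ha, fwdDiff_add_choose, prod_insert ha,
      mixedFwdDiff_sum_shift s k _ (· + 1) (fun y => ((y + #s).choose #s : ℤ))]
    simp only [ih, sum_const, card_range, nsmul_eq_mul]

/-- The finite-difference computation at the heart of Bézout's 1779 theorem: the `n`-th
mixed finite difference of `T ↦ (T + n).choose n` with increments `k₁, …, kₙ` equals the
product `k₁·k₂⋯kₙ`. -/
theorem finite_difference_choose (n T : ℕ) (k : Fin n → ℕ) :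
    ∑ S : Finset (Fin n), (-1 : ℤ) ^ (n - S.card) *
        (((T + ∑ i ∈ S, k i + n).choose n : ℤ)) =
      ∏ i, (k i : ℤ) := by
  simpa [mixedFwdDiff] using mixedFwdDiff_add_choose univ k T
end

section
/- Let R be a commutative ring, α, β ∈ R, and n ≥ 1 a natural number. Set x = ∑_{k=1}^{n−1} α^{n−k}·β^{k}. Then xⁿ = ∑_{k=2}^{n} (n.choose k)·(α·β)ⁿ·(∑_{j=0}^{k−2} α^{n·j}·β^{n·(k−2−j)})·x^{n−k}. -/
/-!
Put `a = αⁿ`, `b = βⁿ` and let `x` be the sum of the mean proportionals. Then `a + x = α S` and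
`b + x = β S` with `S = ∑ βⁱ αⁿ⁻¹⁻ⁱ`, so `b (a + x)ⁿ = a (b + x)ⁿ`. Expanding both sides binomially,
the coefficient of `xⁿ⁻ᵏ` is `C(n,k) (b aᵏ - a bᵏ) = C(n,k) (a - b) ab (aᵏ⁻² + ⋯ + bᵏ⁻²)`, so the
difference is `a - b` times Bézout's equation (E). For indeterminates `α, β` over `ℤ` the factor
`αⁿ - βⁿ` can be cancelled, and specialising the indeterminates gives (E) in every commutative ring.
-/

open Finset

section MeanProportionals

variable {R : Type*} [CommRing R]

def meanProportionalSum (α β : R) (n : ℕ) : R :=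
  ∑ k ∈ Icc 1 (n - 1), α ^ (n - k) * β ^ k

lemma map_meanProportionalSum {S F : Type*} [CommRing S] [FunLike F R S] [RingHomClass F R S]
    (f : F) (α β : R) (n : ℕ) :
    f (meanProportionalSum α β n) = meanProportionalSum (f α) (f β) n := by
  simp only [meanProportionalSum, map_sum, map_mul, map_pow]

lemma sum_range_succ_eq_pow_add_meanProportionalSum_add_pow (α β : R) {n : ℕ} (hn : 1 ≤ n) :
    ∑ i ∈ range (n + 1), β ^ i * α ^ (n - i) = α ^ n + meanProportionalSum α β n + β ^ n := by
  obtain ⟨m, rfl⟩ := Nat.exists_eq_add_of_le' hn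
  rw [range_eq_Ico, sum_eq_sum_Ico_succ_bot (by omega), sum_Ico_succ_top (by omega), zero_add,
    Ico_add_one_right_eq_Icc, meanProportionalSum, Nat.add_sub_cancel]
  simp only [pow_zero, one_mul, Nat.sub_zero, Nat.sub_self, mul_comm (β ^ _), add_assoc]

lemma pow_left_add_meanProportionalSum (α β : R) {n : ℕ} (hn : 1 ≤ n) :
    α ^ n + meanProportionalSum α β n = α * ∑ i ∈ range n, β ^ i * α ^ (n - 1 - i) := by
  have := sum_range_succ_eq_pow_add_meanProportionalSum_add_pow α β hn
  rw [geom_sum₂_succ_eq] at this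
  linear_combination -this

lemma pow_right_add_meanProportionalSum (α β : R) {n : ℕ} (hn : 1 ≤ n) :
    β ^ n + meanProportionalSum α β n = β * ∑ i ∈ range n, β ^ i * α ^ (n - 1 - i) := by
  have := sum_range_succ_eq_pow_add_meanProportionalSum_add_pow α β hn
  have hcomm := geom_sum₂_comm β α (n + 1)
  simp only [Nat.add_sub_cancel] at hcomm
  rw [hcomm, geom_sum₂_succ_eq, geom_sum₂_comm] at this
  linear_combination -this

lemma mul_pow_sub_mul_pow (a b : R) {k : ℕ} (hk : 1 ≤ k) :
    b * a ^ k - a * b ^ k = (a - b) * (a * b * ∑ j ∈ range (k - 1), a ^ j * b ^ (k - 2 - j)) := by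
  obtain ⟨m, rfl⟩ := Nat.exists_eq_add_of_le' hk
  rw [Nat.add_sub_cancel, show m + 1 - 2 = m - 1 by omega]
  linear_combination -(a * b) * geom_sum₂_mul a b m

lemma pow_mul_pow_add_meanProportionalSum_pow (α β : R) {n : ℕ} (hn : 1 ≤ n) :
    β ^ n * (α ^ n + meanProportionalSum α β n) ^ n =
      α ^ n * (β ^ n + meanProportionalSum α β n) ^ n := by
  rw [pow_left_add_meanProportionalSum α β hn, pow_right_add_meanProportionalSum α β hn]
  ring

lemma mul_add_pow_sub_mul_add_pow (a b x : R) (n : ℕ) :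
    b * (a + x) ^ n - a * (b + x) ^ n = (a - b) *
      (∑ k ∈ Icc 2 n, (n.choose k : R) * (a * b) * (∑ j ∈ range (k - 1), a ^ j * b ^ (k - 2 - j)) *
        x ^ (n - k) - x ^ n) := by
  have hrange : range (n + 1) = insert 0 (Icc 1 n) := by
    ext k; simp only [mem_range, mem_insert, mem_Icc]; omega
  have hlow : ∑ k ∈ Icc 2 n, (n.choose k : R) * (a * b) *
        (∑ j ∈ range (k - 1), a ^ j * b ^ (k - 2 - j)) * x ^ (n - k) =
      ∑ k ∈ Icc 1 n, (n.choose k : R) * (a * b) *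
        (∑ j ∈ range (k - 1), a ^ j * b ^ (k - 2 - j)) * x ^ (n - k) := by
    refine sum_subset (Icc_subset_Icc_left one_le_two) fun k hk hk2 => ?_
    simp only [mem_Icc] at hk hk2
    simp [show k = 1 by omega]
  rw [add_pow, add_pow, mul_sum, mul_sum, ← sum_sub_distrib, hrange, sum_insert (by simp), hlow,
    mul_sub, mul_sum]
  have hterm : ∀ k ∈ Icc 1 n,
      b * (a ^ k * x ^ (n - k) * (n.choose k : R)) - a * (b ^ k * x ^ (n - k) * (n.choose k : R)) =
        (a - b) * ((n.choose k : R) * (a * b) *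
          (∑ j ∈ range (k - 1), a ^ j * b ^ (k - 2 - j)) * x ^ (n - k)) := fun k hk =>
    by linear_combination (x ^ (n - k) * (n.choose k : R)) *
      mul_pow_sub_mul_pow a b (mem_Icc.mp hk).1
  rw [sum_congr rfl hterm]
  simp only [pow_zero, one_mul, Nat.sub_zero, Nat.choose_zero_right, Nat.cast_one, mul_one]
  ring

lemma pow_sub_pow_mul_bezout_eq_zero (α β : R) {n : ℕ} (hn : 1 ≤ n) :
    (α ^ n - β ^ n) * (∑ k ∈ Icc 2 n, (n.choose k : R) * (α * β) ^ n *
        (∑ j ∈ range (k - 1), α ^ (n * j) * β ^ (n * (k - 2 - j))) *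
        meanProportionalSum α β n ^ (n - k) - meanProportionalSum α β n ^ n) = 0 := by
  have := mul_add_pow_sub_mul_add_pow (α ^ n) (β ^ n) (meanProportionalSum α β n) n
  rw [pow_mul_pow_add_meanProportionalSum_pow α β hn, sub_self] at this
  simpa only [mul_pow, pow_mul] using this.symm

end MeanProportionals

lemma MvPolynomial.X_pow_sub_X_pow_ne_zero {σ S : Type*} [CommRing S] [Nontrivial S] {i j : σ}
    (hij : i ≠ j) {n : ℕ} (hn : n ≠ 0) : (X i : MvPolynomial σ S) ^ n - X j ^ n ≠ 0 := by
  classical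
  intro h
  have := congrArg (eval fun k => if k = i then (1 : S) else 0) h
  simp [hij.symm, hn] at this

/-- Bézout (1762): the sum of the `n−1` mean proportionals
`x = α^{n−1}β + α^{n−2}β² + ⋯ + αβ^{n−1}` satisfies his equation (E) of degree `n`
without second term:
`xⁿ = ∑_{k=2}^{n} C(n,k)·(αβ)ⁿ·(∑_{j=0}^{k−2} α^{nj}·β^{n(k−2−j)})·x^{n−k}`. -/
theorem bezout_sum_of_radicals_root {R : Type*} [CommRing R] (α β : R) (n : ℕ)
    (hn : 1 ≤ n) :
    (∑ k ∈ Finset.Icc 1 (n - 1), α ^ (n - k) * β ^ k) ^ n =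
      ∑ k ∈ Finset.Icc 2 n, (n.choose k : R) * (α * β) ^ n *
        (∑ j ∈ Finset.range (k - 1), α ^ (n * j) * β ^ (n * (k - 2 - j))) *
        (∑ k' ∈ Finset.Icc 1 (n - 1), α ^ (n - k') * β ^ k') ^ (n - k) := by
  have hne := MvPolynomial.X_pow_sub_X_pow_ne_zero (S := ℤ) (zero_ne_one : (0 : Fin 2) ≠ 1)
    (Nat.one_le_iff_ne_zero.mp hn)
  have huniv := (mul_eq_zero.mp (pow_sub_pow_mul_bezout_eq_zero _ _ hn)).resolve_left hne
  have hspec := congrArg (MvPolynomial.aeval ![α, β]) (sub_eq_zero.mp huniv)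
  simp only [map_sum, map_mul, map_pow, map_natCast, map_meanProportionalSum,
    MvPolynomial.aeval_X, Matrix.cons_val_zero, Matrix.cons_val_one] at hspec
  exact hspec.symm
end
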